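/- Let {X_n}_{n=1}^∞ be a Lévy family of mm-spaces with total measures m_n, let R > 0 and let C : (0,R] → [1,∞) be an arbitrary function. Then for every κ > 0, sup{ diam(X_n ⟶_{Lip₁} Y, m_n − κ) : (Y, ν_Y) ∈ D_{C,R} } → 0 as n → ∞. Equivalently: for every κ > 0 and ε > 0 there exists N such that for all n ≥ N, every (Y, ν_Y) ∈ D_{C,R}, and every 1-Lipschitz map f : X_n → Y, there is a Borel subset Y₀ ⊆ Y with diam Y₀ ≤ ε and (f_*μ_n)(Y₀) ≥ m_n − κ. -/

import Mathlib

open MeasureTheory Metric Filter ENNReal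

/-- Distance between two subsets of a (pseudo-e)metric space. -/
noncomputable def setEDist {α : Type*} [PseudoEMetricSpace α] (A B : Set α) : ℝ≥0∞ :=
  ⨅ (a ∈ A) (b ∈ B), edist a b

/-- Partial diameter of a measure: infimum of diameters of Borel sets of measure at least `a`. -/
noncomputable def partialDiam {Y : Type*} [PseudoEMetricSpace Y] [MeasurableSpace Y]
    (ν : Measure Y) (a : ℝ≥0∞) : ℝ≥0∞ :=
  ⨅ (s : Set Y) (_ : MeasurableSet s) (_ : a ≤ ν s), EMetric.diam s

/-- Observable diameter `diam (X ⟶_{Lip₁} Y, m - κ)` of an mm-space `(X, μ)` with screen `Y`. -/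
noncomputable def obsDiam {X : Type*} [PseudoMetricSpace X] [MeasurableSpace X]
    (Y : Type*) [PseudoMetricSpace Y] [MeasurableSpace Y]
    (μ : Measure X) (κ : ℝ) : ℝ≥0∞ :=
  ⨆ (f : X → Y) (_ : LipschitzWith 1 f),
    partialDiam (Measure.map f μ) (μ Set.univ - ENNReal.ofReal κ)

/-- A sequence of mm-spaces is a Lévy family if the observable diameters with screen `ℝ`
tend to `0` for every `κ > 0`. -/
def IsLevyFamily (X : ℕ → Type*) [∀ n, MetricSpace (X n)] [∀ n, MeasurableSpace (X n)]
    (μ : ∀ n, Measure (X n)) : Prop :=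
  ∀ κ : ℝ, 0 < κ → Tendsto (fun n => obsDiam ℝ (μ n) κ) atTop (nhds 0)

/-- `(Y, ν) ∈ D_{C,R}`: every closed ball of radius `0 < r ≤ R` has positive finite measure,
and the doubling condition `ν(B(x,2r)) ≤ C(r) ν(B(x,r))` holds. -/
def memD {Y : Type*} [PseudoMetricSpace Y] [MeasurableSpace Y]
    (ν : Measure Y) (R : ℝ) (C : ℝ → ℝ) : Prop :=
  ∀ (x : Y) (r : ℝ), 0 < r → r ≤ R →
    0 < ν (Metric.closedBall x r) ∧ ν (Metric.closedBall x r) < ⊤ ∧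
      ν (Metric.closedBall x (2 * r)) ≤ ENNReal.ofReal (C r) * ν (Metric.closedBall x r)

/-- Choice of a color not in `s`. -/
noncomputable def pickColor {K : ℕ} (hK : 0 < K) (s : Finset (Fin K)) : Fin K :=
  if h : ∃ c : Fin K, c ∉ s then h.choose else ⟨0, hK⟩

lemma pickColor_spec {K : ℕ} (hK : 0 < K) {s : Finset (Fin K)} (h : s.card < K) :
    pickColor hK s ∉ s := by
  have hex : ∃ c : Fin K, c ∉ s := by
    by_contra hc
    push_neg at hc
    have hsub : (Finset.univ : Finset (Fin K)) ⊆ s := fun c _ => hc c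
    have := Finset.card_le_card hsub
    rw [Finset.card_univ, Fintype.card_fin] at this
    omega
  rw [pickColor, dif_pos hex]
  exact hex.choose_spec

/-- Greedy coloring of a countable graph with degrees `< K` by `K` colors. -/
lemma exists_coloring {Z : Type*} [Countable Z] (K : ℕ) (hK : 0 < K)
    (G : Z → Z → Prop) (hsymm : ∀ z w, G z w → G w z) (hirr : ∀ z, ¬ G z z)
    (hfin : ∀ z, Set.Finite {w | G z w})
    (hdeg : ∀ z, (hfin z).toFinset.card < K) :
    ∃ col : Z → Fin K, ∀ z w, G z w → col z ≠ col w := by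
  classical
  obtain ⟨ι, hι⟩ := Countable.exists_injective_nat Z
  let nbr : ℕ → Finset ℕ := fun n =>
    (Finset.range n).filter (fun m => ∃ z w : Z, ι z = m ∧ ι w = n ∧ G z w)
  let colA : ℕ → ℕ → Fin K := fun N =>
    Nat.rec (fun _ => ⟨0, hK⟩)
      (fun n ih => Function.update ih n (pickColor hK ((nbr n).image ih))) N
  have hstep : ∀ n, colA (n+1) =
      Function.update (colA n) n (pickColor hK ((nbr n).image (colA n))) := fun n => rfl
  have hagree : ∀ N m, m < N → colA N m = colA (m+1) m := by
    intro N
    induction N with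
    | zero => intro m hm; omega
    | succ N ih =>
      intro m hm
      rcases Nat.lt_or_ge m N with h | h
      · rw [hstep, Function.update_of_ne (by omega)]
        exact ih m h
      · have hmN : m = N := by omega
        subst hmN; rfl
  set col : Z → Fin K := fun z => colA (ι z + 1) (ι z) with hcoldef
  have key : ∀ w z, G z w → ι z < ι w → col w ≠ col z := by
    intro w z hG hlt
    have hmem : ι z ∈ nbr (ι w) := by
      simp only [nbr, Finset.mem_filter, Finset.mem_range]
      exact ⟨hlt, z, w, rfl, rfl, hG⟩
    have himg : col z ∈ (nbr (ι w)).image (colA (ι w)) := by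
      refine Finset.mem_image.2 ⟨ι z, hmem, ?_⟩
      rw [hagree (ι w) (ι z) hlt]
    have hsel : ∀ m ∈ nbr (ι w), ∃ z' : Z, ι z' = m ∧ G w z' := by
      intro m hm
      simp only [nbr, Finset.mem_filter, Finset.mem_range] at hm
      obtain ⟨-, z', w', hz', hw', hG'⟩ := hm
      have hww : w' = w := hι hw'
      subst hww
      exact ⟨z', hz', hsymm _ _ hG'⟩
    have hcard : ((nbr (ι w)).image (colA (ι w))).card < K := by
      have h1 : (nbr (ι w)).card ≤ (hfin w).toFinset.card := by
        refine Finset.card_le_card_of_injOn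
          (fun m => if h : ∃ z' : Z, ι z' = m ∧ G w z' then h.choose else w) ?_ ?_
        · intro m hm
          dsimp only
          rw [dif_pos (hsel m hm)]
          have := (hsel m hm).choose_spec
          simp only [Finset.mem_coe, Set.Finite.mem_toFinset, Set.mem_setOf_eq]
          exact this.2
        · intro m₁ h₁ m₂ h₂ heq
          have h₁' : m₁ ∈ nbr (ι w) := Finset.mem_coe.1 h₁
          have h₂' : m₂ ∈ nbr (ι w) := Finset.mem_coe.1 h₂
          dsimp only at heq
          rw [dif_pos (hsel m₁ h₁'), dif_pos (hsel m₂ h₂')] at heq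
          have e₁ := (hsel m₁ h₁').choose_spec.1
          have e₂ := (hsel m₂ h₂').choose_spec.1
          rw [← e₁, ← e₂, heq]
      calc ((nbr (ι w)).image (colA (ι w))).card ≤ (nbr (ι w)).card := Finset.card_image_le
        _ ≤ (hfin w).toFinset.card := h1
        _ < K := hdeg w
    have hnot : col w ∉ (nbr (ι w)).image (colA (ι w)) := by
      have heq : col w = pickColor hK ((nbr (ι w)).image (colA (ι w))) := by
        show colA (ι w + 1) (ι w) = _
        rw [hstep, Function.update_self]
      rw [heq]
      exact pickColor_spec hK hcard
    intro hEq
    exact hnot (hEq ▸ himg)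
  refine ⟨col, fun z w hG => ?_⟩
  have hne : z ≠ w := fun h => hirr z (h ▸ hG)
  have hιne : ι z ≠ ι w := fun h => hne (hι h)
  rcases lt_or_gt_of_ne hιne with h | h
  · exact fun hEq => key w z hG h hEq.symm
  · exact key z w (hsymm _ _ hG) h

/-- Doubling count: an `r`-separated finite set inside a `4r`-ball has boundedly many points. -/
lemma card_le_of_separated {Y : Type*} [MetricSpace Y] [MeasurableSpace Y] [BorelSpace Y]
    (ν : Measure Y) (R : ℝ) (C : ℝ → ℝ) (hν : memD ν R C)
    (hC : ∀ s : ℝ, 0 < s → s ≤ R → 1 ≤ C s)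
    (r : ℝ) (hr : 0 < r) (hrR : 8 * r ≤ R)
    (x : Y) (T : Finset Y)
    (hTsep : (↑T : Set Y).Pairwise (fun a b => r < dist a b))
    (hTx : ∀ w ∈ T, dist w x ≤ 4 * r) :
    (T.card : ℝ≥0∞) ≤ ENNReal.ofReal (C (r/2) * C r * C (2*r) * C (4*r) * C (8*r)) := by
  classical
  have hc1 : 0 ≤ C (r/2) := le_trans zero_le_one (hC _ (by linarith) (by linarith))
  have hc2 : 0 ≤ C r := le_trans zero_le_one (hC _ hr (by linarith))
  have hc3 : 0 ≤ C (2*r) := le_trans zero_le_one (hC _ (by linarith) (by linarith))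
  have hc4 : 0 ≤ C (4*r) := le_trans zero_le_one (hC _ (by linarith) (by linarith))
  have hc5 : 0 ≤ C (8*r) := le_trans zero_le_one (hC _ (by linarith) (by linarith))
  set P : ℝ := C (r/2) * C r * C (2*r) * C (4*r) * C (8*r) with hP
  obtain ⟨hVpos, hVlt, -⟩ := hν x (4*r + r/2) (by linarith) (by linarith)
  set V : ℝ≥0∞ := ν (Metric.closedBall x (4*r + r/2)) with hV
  have hprod : ENNReal.ofReal P = ENNReal.ofReal (C (r/2)) * ENNReal.ofReal (C r) *
      ENNReal.ofReal (C (2*r)) * ENNReal.ofReal (C (4*r)) * ENNReal.ofReal (C (8*r)) := by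
    rw [hP, ENNReal.ofReal_mul (mul_nonneg (mul_nonneg (mul_nonneg hc1 hc2) hc3) hc4),
      ENNReal.ofReal_mul (mul_nonneg (mul_nonneg hc1 hc2) hc3),
      ENNReal.ofReal_mul (mul_nonneg hc1 hc2), ENNReal.ofReal_mul hc1]
  have key : ∀ w ∈ T, V ≤ ENNReal.ofReal P * ν (Metric.closedBall w (r/2)) := by
    intro w hw
    have hsub : Metric.closedBall x (4*r + r/2) ⊆ Metric.closedBall w (2*(8*r)) := by
      intro p hp
      rw [Metric.mem_closedBall] at hp ⊢
      have h1 : dist p w ≤ dist p x + dist x w := dist_triangle _ _ _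
      have h2 : dist x w ≤ 4*r := by rw [dist_comm]; exact hTx w hw
      linarith
    have d5 := (hν w (8*r) (by linarith) (by linarith)).2.2
    have d4 := (hν w (4*r) (by linarith) (by linarith)).2.2
    have d3 := (hν w (2*r) (by linarith) (by linarith)).2.2
    have d2 := (hν w r hr (by linarith)).2.2
    have d1 := (hν w (r/2) (by linarith) (by linarith)).2.2
    rw [show 2*(4*r) = 8*r by ring] at d4
    rw [show (2:ℝ)*(2*r) = 4*r by ring] at d3
    rw [show 2*(r/2) = r by ring] at d1
    calc V ≤ ν (Metric.closedBall w (2*(8*r))) := measure_mono hsub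
      _ ≤ ENNReal.ofReal (C (8*r)) * ν (Metric.closedBall w (8*r)) := d5
      _ ≤ ENNReal.ofReal (C (8*r)) * (ENNReal.ofReal (C (4*r)) *
          ν (Metric.closedBall w (4*r))) := mul_le_mul_right d4 _
      _ ≤ ENNReal.ofReal (C (8*r)) * (ENNReal.ofReal (C (4*r)) * (ENNReal.ofReal (C (2*r)) *
          ν (Metric.closedBall w (2*r)))) := mul_le_mul_right (mul_le_mul_right d3 _) _
      _ ≤ ENNReal.ofReal (C (8*r)) * (ENNReal.ofReal (C (4*r)) * (ENNReal.ofReal (C (2*r)) *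
          (ENNReal.ofReal (C r) * ν (Metric.closedBall w r)))) :=
            mul_le_mul_right (mul_le_mul_right (mul_le_mul_right d2 _) _) _
      _ ≤ ENNReal.ofReal (C (8*r)) * (ENNReal.ofReal (C (4*r)) * (ENNReal.ofReal (C (2*r)) *
          (ENNReal.ofReal (C r) * (ENNReal.ofReal (C (r/2)) *
            ν (Metric.closedBall w (r/2)))))) :=
            mul_le_mul_right (mul_le_mul_right (mul_le_mul_right (mul_le_mul_right d1 _) _) _) _
      _ = ENNReal.ofReal P * ν (Metric.closedBall w (r/2)) := by rw [hprod]; ring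
  have hdisj : (↑T : Set Y).PairwiseDisjoint (fun w => Metric.closedBall w (r/2)) := by
    intro a ha b hb hab
    exact Metric.closedBall_disjoint_closedBall (by linarith [hTsep ha hb hab])
  have hsum : ∑ w ∈ T, ν (Metric.closedBall w (r/2)) = ν (⋃ w ∈ T, Metric.closedBall w (r/2)) :=
    (measure_biUnion_finset hdisj (fun w _ => measurableSet_closedBall)).symm
  have hsub2 : (⋃ w ∈ T, Metric.closedBall w (r/2)) ⊆ Metric.closedBall x (4*r + r/2) := by
    intro p hp
    rw [Set.mem_iUnion₂] at hp
    obtain ⟨w, hw, hpw⟩ := hp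
    rw [Metric.mem_closedBall] at hpw ⊢
    have h1 := dist_triangle p w x
    have h2 := hTx w hw
    linarith
  have hle : ∑ w ∈ T, ν (Metric.closedBall w (r/2)) ≤ V := by
    rw [hsum]; exact measure_mono hsub2
  have hmul : (T.card : ℝ≥0∞) * V ≤ ENNReal.ofReal P * V := by
    calc (T.card : ℝ≥0∞) * V = ∑ _w ∈ T, V := by rw [Finset.sum_const, nsmul_eq_mul]
      _ ≤ ∑ w ∈ T, ENNReal.ofReal P * ν (Metric.closedBall w (r/2)) := Finset.sum_le_sum key
      _ = ENNReal.ofReal P * ∑ w ∈ T, ν (Metric.closedBall w (r/2)) := (Finset.mul_sum _ _ _).symm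
      _ ≤ ENNReal.ofReal P * V := mul_le_mul_right hle _
  exact (ENNReal.mul_le_mul_iff_left (ne_of_gt hVpos) (ne_of_lt hVlt)).1 hmul

/-- Observable concentration of a Lévy family into spaces with doubling measures. -/
theorem levy_concentration_doubling_screens.{u}
    (X : ℕ → Type*) [∀ n, MetricSpace (X n)] [∀ n, CompleteSpace (X n)]
    [∀ n, TopologicalSpace.SeparableSpace (X n)]
    [∀ n, MeasurableSpace (X n)] [∀ n, BorelSpace (X n)]
    (μ : ∀ n, Measure (X n)) [∀ n, IsFiniteMeasure (μ n)]
    (hLevy : IsLevyFamily X μ)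
    (R : ℝ) (hR : 0 < R) (C : ℝ → ℝ) (hC : ∀ r : ℝ, 0 < r → r ≤ R → 1 ≤ C r)
    (κ ε : ℝ) (hκ : 0 < κ) (hε : 0 < ε) :
    ∃ N : ℕ, ∀ n, N ≤ n →
      ∀ (Y : Type u) [MetricSpace Y] [MeasurableSpace Y] [BorelSpace Y],
        ∀ ν : Measure Y, memD ν R C →
          ∀ f : X n → Y, LipschitzWith 1 f →
            ∃ Y₀ : Set Y, MeasurableSet Y₀ ∧ EMetric.diam Y₀ ≤ ENNReal.ofReal ε ∧
              μ n Set.univ - ENNReal.ofReal κ ≤ Measure.map f (μ n) Y₀ := by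
  classical
  -- scales
  set r : ℝ := min (ε/5) (R/8) with hrdef
  have hr : 0 < r := lt_min (by linarith) (by linarith)
  have hr5 : 5 * r ≤ ε := by
    have := min_le_left (ε/5) (R/8); rw [← hrdef] at this; linarith
  have hr8 : 8 * r ≤ R := by
    have := min_le_right (ε/5) (R/8); rw [← hrdef] at this; linarith
  set δ : ℝ := r/2 with hδdef
  have hδ : 0 < δ := by rw [hδdef]; linarith
  -- doubling constant
  set D : ℝ := C (r/2) * C r * C (2*r) * C (4*r) * C (8*r) with hD
  have a1 : 1 ≤ C (r/2) := hC _ (by linarith) (by linarith)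
  have a2 : 1 ≤ C r := hC _ hr (by linarith)
  have a3 : 1 ≤ C (2*r) := hC _ (by linarith) (by linarith)
  have a4 : 1 ≤ C (4*r) := hC _ (by linarith) (by linarith)
  have a5 : 1 ≤ C (8*r) := hC _ (by linarith) (by linarith)
  have hD1 : 1 ≤ D := by
    have m1 : 1 ≤ C (r/2) * C r := by nlinarith
    have m2 : 1 ≤ C (r/2) * C r * C (2*r) := by nlinarith
    have m3 : 1 ≤ C (r/2) * C r * C (2*r) * C (4*r) := by nlinarith
    rw [hD]; nlinarith
  set K : ℕ := ⌈D⌉₊ with hKdef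
  have hKpos : 0 < K := by
    rw [hKdef]; exact Nat.ceil_pos.mpr (lt_of_lt_of_le one_pos hD1)
  have hKR : (0:ℝ) < 5 * K := by
    have : (1:ℝ) ≤ (K:ℝ) := by exact_mod_cast hKpos
    linarith
  set κ' : ℝ := κ / (5 * K) with hκ'def
  have hκ' : 0 < κ' := by rw [hκ'def]; exact div_pos hκ hKR
  have hκ'κ : κ' ≤ κ := by
    rw [hκ'def]
    apply div_le_self (le_of_lt hκ)
    have : (1:ℝ) ≤ (K:ℝ) := by exact_mod_cast hKpos
    linarith
  -- choose N from the Lévy property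
  have hN0 : ∀ᶠ n in atTop, obsDiam ℝ (μ n) κ' < ENNReal.ofReal δ :=
    (hLevy κ' hκ').eventually (Iio_mem_nhds (ENNReal.ofReal_pos.mpr hδ))
  obtain ⟨N, hN⟩ := Filter.eventually_atTop.1 hN0
  refine ⟨N, ?_⟩
  intro n hn Y instY instMY instBY ν hν f hf
  set m : ℝ≥0∞ := μ n Set.univ with hm
  set κt : ℝ≥0∞ := ENNReal.ofReal κ' with hκt
  have hκtpos : 0 < κt := ENNReal.ofReal_pos.mpr hκ'
  have hκttop : κt ≠ ⊤ := ENNReal.ofReal_ne_top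
  by_cases htriv : m ≤ ENNReal.ofReal κ
  · exact ⟨∅, MeasurableSet.empty, le_of_eq_of_le EMetric.diam_empty bot_le,
      by simp [tsub_eq_zero_of_le htriv]⟩
  push_neg at htriv
  have hκtm : κt ≤ m :=
    le_of_lt (lt_of_le_of_lt (ENNReal.ofReal_le_ofReal hκ'κ) htriv)
  have hfc : Continuous f := hf.continuous
  have hfm : Measurable f := hfc.measurable
  -- concentration of all 1-Lipschitz functions to ℝ
  have hconc : ∀ g : X n → ℝ, LipschitzWith 1 g →
      ∃ s : Set ℝ, MeasurableSet s ∧ m - κt ≤ μ n (g ⁻¹' s) ∧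
        EMetric.diam s < ENNReal.ofReal δ := by
    intro g hg
    have hobs := hN n hn
    unfold obsDiam at hobs
    have h1 : partialDiam (Measure.map g (μ n)) (μ n Set.univ - ENNReal.ofReal κ')
        < ENNReal.ofReal δ :=
      lt_of_le_of_lt (le_iSup₂ (f := fun (g : X n → ℝ) (_ : LipschitzWith 1 g) =>
        partialDiam (Measure.map g (μ n)) (μ n Set.univ - ENNReal.ofReal κ')) g hg) hobs
    unfold partialDiam at h1
    rw [iInf_lt_iff] at h1
    obtain ⟨s, h1⟩ := h1
    rw [iInf_lt_iff] at h1
    obtain ⟨hs, h1⟩ := h1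
    rw [iInf_lt_iff] at h1
    obtain ⟨hmass, h1⟩ := h1
    rw [Measure.map_apply hg.continuous.measurable hs] at hmass
    exact ⟨s, hs, hmass, h1⟩
  -- complement of an almost-full set is small
  have hcomplLe : ∀ S : Set (X n), MeasurableSet S → m - κt ≤ μ n S → μ n Sᶜ ≤ κt := by
    intro S hSm hSfull
    rw [measure_compl hSm (measure_ne_top _ _), tsub_le_iff_right]
    calc μ n Set.univ = m := rfl
      _ = κt + (m - κt) := by rw [add_comm, tsub_add_cancel_of_le hκtm]
      _ ≤ κt + μ n S := add_le_add_right hSfull _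
  -- key concentration fact: thickenings of heavy sets are almost full
  have hF1 : ∀ A' : Set Y, κt < μ n (f ⁻¹' A') →
      m - κt ≤ μ n (f ⁻¹' Metric.thickening δ A') := by
    intro A' hA'
    set A : Set (X n) := f ⁻¹' A' with hA
    have hAne : A.Nonempty :=
      nonempty_of_measure_ne_zero (ne_of_gt (lt_of_le_of_lt zero_le hA'))
    obtain ⟨s, hs, hmass, hdiam⟩ :=
      hconc (fun x => Metric.infDist x A) (Metric.lipschitz_infDist_pt A)
    have hgm : Measurable (fun x => Metric.infDist x A) :=
      (Metric.lipschitz_infDist_pt A).continuous.measurable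
    have hcompl : μ n (((fun x => Metric.infDist x A) ⁻¹' s)ᶜ) ≤ κt :=
      hcomplLe _ (hgm hs) hmass
    have hinter : (A ∩ (fun x => Metric.infDist x A) ⁻¹' s).Nonempty := by
      by_contra hemp
      rw [Set.not_nonempty_iff_eq_empty] at hemp
      have hsubA : A ⊆ ((fun x => Metric.infDist x A) ⁻¹' s)ᶜ := by
        intro a ha hmem
        exact Set.eq_empty_iff_forall_notMem.1 hemp a ⟨ha, hmem⟩
      exact absurd (le_trans (measure_mono hsubA) hcompl) (not_le.mpr hA')
    obtain ⟨a, haA, has⟩ := hinter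
    have hsub : (fun x => Metric.infDist x A) ⁻¹' s ⊆ f ⁻¹' Metric.thickening δ A' := by
      intro x hx
      have h1 : edist (Metric.infDist x A) (Metric.infDist a A) ≤ EMetric.diam s :=
        EMetric.edist_le_diam_of_mem hx has
      have h2 : dist (Metric.infDist x A) (Metric.infDist a A) < δ := by
        have h3 := lt_of_le_of_lt h1 hdiam
        rw [edist_dist] at h3
        exact (ENNReal.ofReal_lt_ofReal_iff hδ).1 h3
      rw [Metric.infDist_zero_of_mem haA, Real.dist_eq, sub_zero] at h2
      have h4 : Metric.infDist x A < δ :=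
        lt_of_le_of_lt (le_abs_self _) h2
      obtain ⟨a', ha'A, ha'd⟩ := (Metric.infDist_lt_iff hAne).1 h4
      show f x ∈ Metric.thickening δ A'
      rw [Metric.mem_thickening_iff]
      refine ⟨f a', ha'A, ?_⟩
      calc dist (f x) (f a') ≤ dist x a' := by
            have := hf.dist_le_mul x a'; simpa using this
        _ < δ := ha'd
    exact le_trans hmass (measure_mono hsub)
  by_cases hheavy : ∃ y : Y, κt < μ n (f ⁻¹' Metric.closedBall y (2*r))
  · obtain ⟨y, hy⟩ := hheavy
    refine ⟨Metric.closedBall y (2*r + δ), measurableSet_closedBall, ?_, ?_⟩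
    · apply EMetric.diam_le
      intro p hp q hq
      rw [Metric.mem_closedBall] at hp hq
      rw [edist_dist]
      apply ENNReal.ofReal_le_ofReal
      have h1 := dist_triangle p y q
      rw [dist_comm y q] at h1
      have hδr : δ = r/2 := hδdef
      linarith
    · rw [Measure.map_apply hfm measurableSet_closedBall]
      have hsub : Metric.thickening δ (Metric.closedBall y (2*r)) ⊆
          Metric.closedBall y (2*r + δ) := by
        intro p hp
        rw [Metric.mem_thickening_iff] at hp
        obtain ⟨z, hz, hdz⟩ := hp
        rw [Metric.mem_closedBall] at hz ⊢
        have := dist_triangle p z y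
        linarith
      calc m - ENNReal.ofReal κ ≤ m - κt :=
            tsub_le_tsub_left (ENNReal.ofReal_le_ofReal hκ'κ) m
        _ ≤ μ n (f ⁻¹' Metric.thickening δ (Metric.closedBall y (2*r))) := hF1 _ hy
        _ ≤ μ n (f ⁻¹' Metric.closedBall y (2*r + δ)) :=
            measure_mono (Set.preimage_mono hsub)
  · exfalso
    push_neg at hheavy
    -- separable ambient set and a maximal `r`-separated net
    set Y' : Set Y := closure (Set.range f) with hY'
    have hY'sep : TopologicalSpace.IsSeparable Y' :=
      (TopologicalSpace.isSeparable_range hfc).closure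
    set SepF : Set (Set Y) := {S | S ⊆ Y' ∧ S.Pairwise (fun a b => r < dist a b)} with hSepF
    have hzorn : ∀ c ⊆ SepF, IsChain (· ⊆ ·) c → c.Nonempty →
        ∃ ub ∈ SepF, ∀ s ∈ c, s ⊆ ub := by
      intro c hcS hchain _
      refine ⟨⋃₀ c, ⟨Set.sUnion_subset fun s hs => (hcS hs).1, ?_⟩,
        fun s hs => Set.subset_sUnion_of_mem hs⟩
      intro a ha b hb hab
      obtain ⟨s, hsc, has⟩ := ha
      obtain ⟨t, htc, hbt⟩ := hb
      rcases hchain.total hsc htc with h | h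
      · exact (hcS htc).2 (h has) hbt hab
      · exact (hcS hsc).2 has (h hbt) hab
    obtain ⟨M, -, hMmax⟩ := zorn_subset_nonempty SepF hzorn ∅
      ⟨Set.empty_subset _, Set.pairwise_empty _⟩
    have hMsub : M ⊆ Y' := hMmax.1.1
    have hMsep : M.Pairwise (fun a b => r < dist a b) := hMmax.1.2
    have hcover : ∀ y ∈ Y', ∃ z ∈ M, dist y z ≤ r := by
      intro y hy
      by_cases hyM : y ∈ M
      · exact ⟨y, hyM, by rw [dist_self]; linarith⟩
      by_contra hno
      push_neg at hno
      have hins : insert y M ∈ SepF := by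
        constructor
        · exact Set.insert_subset hy hMsub
        · rw [Set.pairwise_insert]
          exact ⟨hMsep, fun b hb _ => ⟨hno b hb, by rw [dist_comm]; exact hno b hb⟩⟩
      have hsub2 := hMmax.2 hins (Set.subset_insert y M)
      exact hyM (hsub2 (Set.mem_insert y M))
    obtain ⟨c₀, hc₀cnt, hc₀cl⟩ := hY'sep
    have hMcnt : M.Countable := by
      have hch : ∀ z ∈ M, ∃ p ∈ c₀, dist z p < r/2 := fun z hz =>
        Metric.mem_closure_iff.1 (hc₀cl (hMsub hz)) (r/2) (by linarith)
      choose! p hp hpd using hch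
      refine Set.MapsTo.countable_of_injOn (fun z hz => hp z hz) ?_ hc₀cnt
      intro z₁ h₁ z₂ h₂ he
      by_contra hne
      have hd := hMsep h₁ h₂ hne
      have d1 := hpd z₁ h₁
      have d2 := hpd z₂ h₂
      rw [he] at d1
      have ht := dist_triangle z₁ (p z₂) z₂
      rw [dist_comm (p z₂) z₂] at ht
      linarith
    haveI : Countable ↥M := hMcnt.to_subtype
    -- bound on separated points in balls of radius 4r
    have hTbound : ∀ (z : Y) (T : Finset Y),
        (↑T : Set Y) ⊆ {w : Y | w ∈ M ∧ dist z w ≤ 4*r} → T.card ≤ K := by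
      intro z T hTsub
      have h1 : (T.card : ℝ≥0∞) ≤ ENNReal.ofReal D := by
        rw [hD]
        apply card_le_of_separated ν R C hν hC r hr hr8 z T
        · intro a ha b hb hab
          exact hMsep (hTsub ha).1 (hTsub hb).1 hab
        · intro w hw
          rw [dist_comm]
          exact (hTsub hw).2
      have h2 : (T.card : ℝ≥0∞) ≤ (K : ℝ≥0∞) := by
        refine le_trans h1 ?_
        rw [← ENNReal.ofReal_natCast]
        exact ENNReal.ofReal_le_ofReal (Nat.le_ceil D)
      exact_mod_cast h2
    have hSfin : ∀ z : Y, {w : Y | w ∈ M ∧ dist z w ≤ 4*r}.Finite := by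
      intro z
      by_contra hinf
      obtain ⟨T, hTsub, hTcard⟩ := Set.Infinite.exists_subset_card_eq hinf (K+1)
      have := hTbound z T hTsub
      omega
    -- the graph and its coloring
    set G : ↥M → ↥M → Prop := fun z w => z ≠ w ∧ dist (z:Y) (w:Y) ≤ 4*r with hG
    have hGsymm : ∀ z w, G z w → G w z := by
      rintro z w ⟨h1, h2⟩
      exact ⟨Ne.symm h1, by rwa [dist_comm]⟩
    have hGirr : ∀ z, ¬ G z z := fun z h => h.1 rfl
    have hGfin : ∀ z : ↥M, Set.Finite {w : ↥M | G z w} := by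
      intro z
      have hsub : {w : ↥M | G z w} ⊆
          Subtype.val ⁻¹' {w : Y | w ∈ M ∧ dist (z:Y) w ≤ 4*r} := by
        rintro w ⟨-, h2⟩
        exact ⟨w.2, h2⟩
      exact Set.Finite.subset ((hSfin (z:Y)).preimage Subtype.val_injective.injOn) hsub
    have hGdeg : ∀ z : ↥M, (hGfin z).toFinset.card < K := by
      intro z
      have hzmem : (z:Y) ∈ (hSfin (z:Y)).toFinset := by
        rw [Set.Finite.mem_toFinset]
        exact ⟨z.2, by rw [dist_self]; linarith⟩
      have hmaps : ∀ w ∈ (hGfin z).toFinset,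
          (w:Y) ∈ (hSfin (z:Y)).toFinset.erase (z:Y) := by
        intro w hw
        rw [Set.Finite.mem_toFinset] at hw
        refine Finset.mem_erase.2 ⟨?_, ?_⟩
        · exact fun he => hw.1 (Subtype.ext he).symm
        · rw [Set.Finite.mem_toFinset]
          exact ⟨w.2, hw.2⟩
      have hcard1 : (hGfin z).toFinset.card ≤ ((hSfin (z:Y)).toFinset.erase (z:Y)).card := by
        apply Finset.card_le_card_of_injOn Subtype.val hmaps
        intro w₁ _ w₂ _ he
        exact Subtype.val_injective he
      have hcard2 : ((hSfin (z:Y)).toFinset.erase (z:Y)).card =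
          (hSfin (z:Y)).toFinset.card - 1 := Finset.card_erase_of_mem hzmem
      have hcard3 : (hSfin (z:Y)).toFinset.card ≤ K := by
        apply hTbound (z:Y)
        intro w hw
        rw [Finset.mem_coe, Set.Finite.mem_toFinset] at hw
        exact hw
      have hpos : 0 < (hSfin (z:Y)).toFinset.card := Finset.card_pos.2 ⟨_, hzmem⟩
      omega
    obtain ⟨col, hcol⟩ := exists_coloring K hKpos G hGsymm hGirr hGfin hGdeg
    -- color classes
    set V : Fin K → Set (X n) := fun c =>
      ⋃ (z : ↥M) (_ : col z = c), f ⁻¹' Metric.closedBall (z:Y) r with hV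
    have hVuniv : (Set.univ : Set (X n)) ⊆ ⋃ c, V c := by
      intro x _
      have hx : f x ∈ Y' := subset_closure (Set.mem_range_self x)
      obtain ⟨z, hzM, hzd⟩ := hcover (f x) hx
      refine Set.mem_iUnion.2 ⟨col ⟨z, hzM⟩, ?_⟩
      simp only [hV, Set.mem_iUnion]
      exact ⟨⟨z, hzM⟩, rfl, Set.mem_preimage.2 (Metric.mem_closedBall.2 hzd)⟩
    have hsumV : m ≤ ∑ c : Fin K, μ n (V c) := by
      calc m = μ n Set.univ := rfl
        _ ≤ μ n (⋃ c, V c) := measure_mono hVuniv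
        _ ≤ ∑' c, μ n (V c) := measure_iUnion_le V
        _ = ∑ c : Fin K, μ n (V c) := tsum_fintype _
    obtain ⟨c₁, -, hc₁⟩ := Finset.exists_max_image Finset.univ
      (fun c => μ n (V c)) ⟨⟨0, hKpos⟩, Finset.mem_univ _⟩
    have hKmul : (K : ℝ≥0∞) * (5 * κt) < (K : ℝ≥0∞) * μ n (V c₁) := by
      have h2 : m ≤ (K : ℝ≥0∞) * μ n (V c₁) := by
        calc m ≤ ∑ c : Fin K, μ n (V c) := hsumV
          _ ≤ ∑ _c : Fin K, μ n (V c₁) :=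
              Finset.sum_le_sum fun c _ => hc₁ c (Finset.mem_univ c)
          _ = (K : ℝ≥0∞) * μ n (V c₁) := by
              rw [Finset.sum_const, Finset.card_univ, Fintype.card_fin, nsmul_eq_mul]
      have h50 : (5:ℝ) * (K:ℝ) ≠ 0 := ne_of_gt hKR
      have hκeq : κ = 5 * (K:ℝ) * κ' := by
        rw [hκ'def]
        field_simp
      have h3 : (K : ℝ≥0∞) * (5 * κt) = ENNReal.ofReal κ := by
        rw [hκt, hκeq, ENNReal.ofReal_mul (by positivity : (0:ℝ) ≤ 5 * (K:ℝ))]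
        rw [show ((5:ℝ) * (K:ℝ)) = ((5 * K : ℕ) : ℝ) by push_cast; ring]
        rw [ENNReal.ofReal_natCast]
        push_cast
        ring
      rw [h3]
      exact lt_of_lt_of_le htriv h2
    have hVbig : 5 * κt < μ n (V c₁) :=
      (ENNReal.mul_lt_mul_iff_right (Nat.cast_ne_zero.mpr hKpos.ne') (ENNReal.natCast_ne_top K)).1 hKmul
    have h15 : κt < 5 * κt := by
      have h5 := (ENNReal.mul_lt_mul_iff_left hκtpos.ne' hκttop).2
        (show (1:ℝ≥0∞) < 5 by norm_num)
      rwa [one_mul] at h5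
    -- enumerate the heaviest color class
    have hZne : Nonempty {z : ↥M // col z = c₁} := by
      by_contra hne
      rw [not_nonempty_iff] at hne
      have hVempty : V c₁ = ∅ := by
        apply Set.eq_empty_iff_forall_notMem.2
        intro x hx
        simp only [hV, Set.mem_iUnion] at hx
        obtain ⟨z, hzc, -⟩ := hx
        exact hne.false ⟨z, hzc⟩
      rw [hVempty, measure_empty] at hVbig
      exact ENNReal.not_lt_zero hVbig
    obtain ⟨q, hq⟩ := exists_surjective_nat {z : ↥M // col z = c₁}
    set W : ℕ → Set (X n) := fun k =>
      ⋃ i ∈ Finset.range k, f ⁻¹' Metric.closedBall (((q i : ↥M)):Y) r with hW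
    have hWmono : Monotone W := by
      intro a b hab
      exact Set.biUnion_subset_biUnion_left (Finset.coe_subset.2 (Finset.range_subset_range.2 hab))
    have hWV : ⋃ k, W k = V c₁ := by
      apply Set.Subset.antisymm
      · apply Set.iUnion_subset
        intro k
        apply Set.iUnion₂_subset
        intro i _
        intro x hx
        simp only [hV, Set.mem_iUnion]
        exact ⟨(q i).1, (q i).2, hx⟩
      · intro x hx
        simp only [hV, Set.mem_iUnion] at hx
        obtain ⟨z, hzc, hxz⟩ := hx
        obtain ⟨i, hi⟩ := hq ⟨z, hzc⟩
        refine Set.mem_iUnion.2 ⟨i+1, ?_⟩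
        refine Set.mem_biUnion (Finset.self_mem_range_succ i) ?_
        have hqz : (q i : ↥M) = z := by rw [hi]
        rw [hqz]
        exact hxz
    have hsupW : μ n (V c₁) = ⨆ k, μ n (W k) := by
      rw [← hWV]
      exact Directed.measure_iUnion (hWmono.directed_le)
    have hex : ∃ k, κt < μ n (W k) := by
      rw [← lt_iSup_iff, ← hsupW]
      exact lt_trans h15 hVbig
    set k₀ := Nat.find hex with hk₀def
    have hk₀spec : κt < μ n (W k₀) := Nat.find_spec hex
    have hk₀min : ∀ j, j < k₀ → μ n (W j) ≤ κt := fun j hj => not_lt.1 (Nat.find_min hex hj)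
    have hk₀pos : k₀ ≠ 0 := by
      intro h0
      rw [h0] at hk₀spec
      have hW0 : W 0 = ∅ := by rw [hW]; simp
      rw [hW0, measure_empty] at hk₀spec
      exact ENNReal.not_lt_zero hk₀spec
    obtain ⟨k₁, hk₁⟩ := Nat.exists_eq_succ_of_ne_zero hk₀pos
    have hWsplit : W k₀ ⊆ W k₁ ∪ f ⁻¹' Metric.closedBall (((q k₁ : ↥M)):Y) r := by
      rw [hk₁]
      intro x hx
      simp only [hW, Set.mem_iUnion, Finset.mem_range] at hx
      obtain ⟨i, hi, hxi⟩ := hx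
      rcases Nat.lt_or_ge i k₁ with h | h
      · left
        simp only [hW, Set.mem_iUnion, Finset.mem_range]
        exact ⟨i, h, hxi⟩
      · right
        have hik : i = k₁ := by omega
        rw [← hik]
        exact hxi
    have hlight2 : ∀ z : Y, μ n (f ⁻¹' Metric.closedBall z r) ≤ κt := by
      intro z
      refine le_trans (measure_mono (Set.preimage_mono ?_)) (hheavy z)
      exact Metric.closedBall_subset_closedBall (by linarith)
    have hWk₀le : μ n (W k₀) ≤ 2 * κt := by
      calc μ n (W k₀) ≤ μ n (W k₁ ∪ f ⁻¹' Metric.closedBall (((q k₁ : ↥M)):Y) r) :=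
            measure_mono hWsplit
        _ ≤ μ n (W k₁) + μ n (f ⁻¹' Metric.closedBall (((q k₁ : ↥M)):Y) r) :=
            measure_union_le _ _
        _ ≤ κt + κt := add_le_add (hk₀min k₁ (by omega)) (hlight2 _)
        _ = 2 * κt := (two_mul κt).symm
    set A' : Set Y := ⋃ i ∈ Finset.range k₀, Metric.closedBall (((q i : ↥M)):Y) r with hA'
    have hpre : f ⁻¹' A' = W k₀ := by
      rw [hA']
      ext x
      simp only [hW, Set.mem_preimage, Set.mem_iUnion, Finset.mem_range]
    have hheavyA : κt < μ n (f ⁻¹' A') := by rw [hpre]; exact hk₀spec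
    have hthick := hF1 A' hheavyA
    set B : Set (X n) := V c₁ \ W k₀ with hB
    have hBsub : B ⊆ (f ⁻¹' Metric.thickening δ A')ᶜ := by
      rintro x ⟨hxV, hxW⟩ hxt
      simp only [hV, Set.mem_iUnion] at hxV
      obtain ⟨z, hzc, hxz⟩ := hxV
      rw [Set.mem_preimage, Metric.mem_thickening_iff] at hxt
      obtain ⟨pp, hpA, hpd⟩ := hxt
      rw [hA', Set.mem_iUnion₂] at hpA
      obtain ⟨i, hi, hpi⟩ := hpA
      have hzq : z ≠ (q i : ↥M) := by
        intro he
        apply hxW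
        simp only [hW, Set.mem_iUnion]
        refine ⟨i, hi, ?_⟩
        rw [← he]
        exact hxz
      have hxzd : dist (f x) (z:Y) ≤ r := hxz
      have hpid : dist pp (((q i : ↥M)):Y) ≤ r := hpi
      have hd : dist (z:Y) (((q i : ↥M)):Y) ≤ 4*r := by
        have t3 := dist_triangle (z:Y) (f x) pp
        have t4 := dist_triangle (z:Y) pp (((q i : ↥M)):Y)
        rw [dist_comm (z:Y) (f x)] at t3
        have hδr : δ = r/2 := hδdef
        linarith
      exact hcol z (q i) ⟨hzq, hd⟩ (by rw [hzc, (q i).2])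
    have hBle : μ n B ≤ κt :=
      le_trans (measure_mono hBsub)
        (hcomplLe _ ((Metric.isOpen_thickening.measurableSet).preimage hfm) hthick)
    have hVsplit : μ n (V c₁) ≤ μ n B + μ n (W k₀) := by
      refine le_trans (measure_mono ?_) (measure_union_le _ _)
      intro x hx
      by_cases hxW : x ∈ W k₀
      · exact Set.mem_union_right _ hxW
      · exact Set.mem_union_left _ ⟨hx, hxW⟩
    have hfinal : μ n (V c₁) ≤ 3 * κt := by
      calc μ n (V c₁) ≤ μ n B + μ n (W k₀) := hVsplit
        _ ≤ κt + 2 * κt := add_le_add hBle hWk₀le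
        _ = 3 * κt := by ring
    have h35 : (3:ℝ≥0∞) * κt < 5 * κt :=
      (ENNReal.mul_lt_mul_iff_left hκtpos.ne' hκttop).2 (by norm_num)
    exact absurd (lt_of_le_of_lt hfinal (lt_trans h35 hVbig)) (lt_irrefl _)
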